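/- arXiv:1112.5545 — 4 statements merged into one kernel-verified Lean document; each statement's English description precedes it below -/
import Mathlib

section
/- Let σ be a continuous (atomless) probability Borel measure on the circle 𝕋 and let k ≥ 2. Define C_k : 𝕋^k → 𝕋 by C_k(z₁, …, z_k) = z₁ ⋯ z_k. Suppose there exists a Borel set E ⊆ 𝕋^k with σ^{⊗k}(E) = 1 on which C_k is one-to-one modulo coordinate permutations (i.e. for x, y ∈ E, C_k(x) = C_k(y) implies y is a coordinate permutation of x). Then there exists a Borel set F ⊆ 𝕋^{k−1} with σ^{⊗(k−1)}(F) = 1 on which C_{k−1} is one-to-one modulo coordinate permutations. -/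
/-!
By Fubini, for `σ^{⊗(k-1)}`-almost every `z` the fibre `{c | (c, z) ∈ E}` has full
`σ`-measure. Two such fibres meet, so if `z` and `z'` have the same product, a common `c` gives
points `(c, z)` and `(c, z')` of `E` with the same product. The permutation relating them can be
chosen to fix the coordinate carrying `c`, and it then relates `z` and `z'`.
-/

open MeasureTheory

noncomputable instance : MeasurableSpace Circle := borel Circle
instance : BorelSpace Circle := ⟨rfl⟩

def ProdInjOnUpToPerm {M : Type*} [CommMonoid M] {k : ℕ} (S : Set (Fin k → M)) : Prop :=
  ∀ x ∈ S, ∀ y ∈ S, ∏ i, x i = ∏ i, y i → ∃ π : Equiv.Perm (Fin k), ∀ i, y i = x (π i)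

theorem Fin.exists_perm_of_cons_eq_cons_comp_perm {α : Type*} {n : ℕ} {c : α}
    {x y : Fin n → α} {π : Equiv.Perm (Fin (n + 1))}
    (h : ∀ i, (Fin.cons c y : Fin (n + 1) → α) i = (Fin.cons c x : Fin (n + 1) → α) (π i)) :
    ∃ ρ : Equiv.Perm (Fin n), ∀ i, y i = x (ρ i) := by
  obtain ⟨⟨p, ρ⟩, rfl⟩ := Equiv.Perm.decomposeFin.symm.surjective π
  refine ⟨ρ, fun i => ?_⟩
  -- `π = swap 0 p ∘ (ρ on the successors)`, and the swap is invisible since `cons c x` is `c` at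
  -- both `0` and `p`.
  have hp : (Fin.cons c x : Fin (n + 1) → α) 0 = (Fin.cons c x : Fin (n + 1) → α) p := by
    simpa using h 0
  simpa [Equiv.apply_swap_eq_self hp] using h i.succ

theorem MeasureTheory.exists_measurableSet_measure_eq_one_of_ae {α : Type*}
    [MeasurableSpace α] {μ : Measure α} [IsProbabilityMeasure μ] {p : α → Prop}
    (h : ∀ᵐ x ∂μ, p x) : ∃ F, MeasurableSet F ∧ μ F = 1 ∧ ∀ x ∈ F, p x := by
  obtain ⟨F, hF, hFm, hFp⟩ := h.exists_measurable_mem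
  exact ⟨F, hFm, (prob_compl_eq_zero_iff hFm).mp (mem_ae_iff.mp hF), hFp⟩

theorem MeasureTheory.Measure.ae_ae_cons_mem_of_ae_mem_pi {M : Type*} [MeasurableSpace M]
    (σ : Measure M) [SigmaFinite σ] {n : ℕ} {E : Set (Fin (n + 1) → M)}
    (hE : ∀ᵐ x ∂Measure.pi fun _ => σ, x ∈ E) :
    ∀ᵐ z ∂Measure.pi (fun _ : Fin n => σ), ∀ᵐ c ∂σ, Fin.cons c z ∈ E := by
  have hcons := (measurePreserving_piFinSuccAbove (fun _ : Fin (n + 1) => σ) 0).symm.comp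
    (measurePreserving_swap (μ := Measure.pi fun _ : Fin n => σ) (ν := σ))
  refine Measure.ae_ae_of_ae_prod (p := fun p => Fin.cons p.2 p.1 ∈ E) ?_
  filter_upwards [hcons.quasiMeasurePreserving.tendsto_ae.eventually hE] with p hp
  simp only [Function.comp_apply, MeasurableEquiv.piFinSuccAbove_symm_apply,
    Fin.insertNthEquiv_zero] at hp
  exact hp

theorem ProdInjOnUpToPerm.exists_measure_pi_eq_one_of_succ {M : Type*} [CommMonoid M]
    [MeasurableSpace M] (σ : Measure M) [IsProbabilityMeasure σ] {n : ℕ}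
    {E : Set (Fin (n + 1) → M)} (hE : ∀ᵐ x ∂Measure.pi fun _ => σ, x ∈ E)
    (hinj : ProdInjOnUpToPerm E) :
    ∃ F : Set (Fin n → M), MeasurableSet F ∧ Measure.pi (fun _ => σ) F = 1 ∧
      ProdInjOnUpToPerm F := by
  obtain ⟨F, hFm, hF1, hF⟩ :=
    exists_measurableSet_measure_eq_one_of_ae (Measure.ae_ae_cons_mem_of_ae_mem_pi σ hE)
  refine ⟨F, hFm, hF1, fun x hx y hy hxy => ?_⟩
  obtain ⟨c, hcx, hcy⟩ := ((hF x hx).and (hF y hy)).exists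
  obtain ⟨π, hπ⟩ := hinj _ hcx _ hcy (by simp [Fin.prod_cons, hxy])
  exact Fin.exists_perm_of_cons_eq_cons_comp_perm hπ

theorem stmt10_general (σ : Measure Circle) [IsProbabilityMeasure σ]
    (k : ℕ)
    (E : Set (Fin k → Circle)) (hE : MeasurableSet E)
    (hE1 : Measure.pi (fun _ : Fin k => σ) E = 1)
    (hinj : ∀ x ∈ E, ∀ y ∈ E, ∏ i, x i = ∏ i, y i →
      ∃ π : Equiv.Perm (Fin k), ∀ i, y i = x (π i)) :
    ∃ F : Set (Fin (k - 1) → Circle), MeasurableSet F ∧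
      Measure.pi (fun _ : Fin (k - 1) => σ) F = 1 ∧
      ∀ x ∈ F, ∀ y ∈ F, ∏ i, x i = ∏ i, y i →
        ∃ π : Equiv.Perm (Fin (k - 1)), ∀ i, y i = x (π i) := by
  cases k with
  -- for `k = 0` truncated subtraction makes `k - 1 = 0`, and the claim is trivial
  | zero => exact ⟨Set.univ, .univ, measure_univ, fun _ _ _ _ _ => ⟨1, fun i => i.elim0⟩⟩
  | succ n =>
    exact ProdInjOnUpToPerm.exists_measure_pi_eq_one_of_succ σ
      (mem_ae_iff.mpr ((prob_compl_eq_zero_iff hE).mpr hE1)) hinj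

/-- If `σ` is an atomless probability Borel measure on the circle, `k ≥ 2`, and the
product map `C_k(z) = z₁⋯z_k` is one-to-one modulo coordinate permutations on some Borel
set `E ⊆ 𝕋^k` of full `σ^{⊗k}`-measure, then `C_{k-1}` is one-to-one modulo coordinate
permutations on some Borel set `F ⊆ 𝕋^{k-1}` of full `σ^{⊗(k-1)}`-measure. -/
theorem stmt10 (σ : Measure Circle) [IsProbabilityMeasure σ]
    (hσ : ∀ x : Circle, σ {x} = 0) (k : ℕ) (hk : 2 ≤ k)
    (E : Set (Fin k → Circle)) (hE : MeasurableSet E)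
    (hE1 : Measure.pi (fun _ : Fin k => σ) E = 1)
    (hinj : ∀ x ∈ E, ∀ y ∈ E, ∏ i, x i = ∏ i, y i →
      ∃ π : Equiv.Perm (Fin k), ∀ i, y i = x (π i)) :
    ∃ F : Set (Fin (k - 1) → Circle), MeasurableSet F ∧
      Measure.pi (fun _ : Fin (k - 1) => σ) F = 1 ∧
      ∀ x ∈ F, ∀ y ∈ F, ∏ i, x i = ∏ i, y i →
        ∃ π : Equiv.Perm (Fin (k - 1)), ∀ i, y i = x (π i) :=
  stmt10_general σ k E hE hE1 hinj
end

section
/- Let σ be a continuous (atomless) probability Borel measure on the circle 𝕋, let 1 ≤ m ≤ n be integers and a ∈ 𝕋, with (m, a) ≠ (n, 1). Suppose σ^{∗n} is not singular with respect to σ^{∗m} ∗ δ_a, where σ^{∗j} is the j-fold convolution power and δ_a the Dirac mass at a. Then for every Borel set F ⊆ 𝕋^{m+n} with σ^{⊗(m+n)}(F) = 1, the multiplication map C_{m+n}(z₁, …, z_{m+n}) = z₁⋯z_{m+n} is not one-to-one modulo coordinate permutations on F; that is, there exist x, y ∈ F with C_{m+n}(x) = C_{m+n}(y) such that y is not a coordinate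 permutation of x. -/
open MeasureTheory

/-- The `j`-fold convolution power `σ^{∗j}` of a measure on the circle: the pushforward
of `σ^{⊗j}` under the product map `C_j`. -/
noncomputable def convPow (σ : Measure Circle) (j : ℕ) : Measure Circle :=
  Measure.map (fun z : Fin j → Circle => ∏ i, z i) (Measure.pi fun _ : Fin j => σ)

/-!
The common part `η ≠ 0` of `σ^{∗m} ∗ δ_a` and `σ^{∗n}` lifts, through the disintegrations of
`σ^{⊗m}` along `u ↦ a ∏ u` and of `σ^{⊗n}` along `v ↦ ∏ v`, to a nonzero measure `Q` on
`𝕋^m × 𝕋^n` carried by `{(u, v) | a ∏ u = ∏ v}` whose marginals are absolutely continuous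
with respect to `σ^{⊗m}` and `σ^{⊗n}`. For `Q`-almost every `(u, v)` and `(u', v')` the
tuples `(u, v')` and `(u', v)` lie in `F` and have the same product, so they are permutations of
each other; since `u` and `u'` share no value (`σ` is atomless), the multiset of values of `v'`
is that of `u'` plus the multiset `W = v - u`, which depends on `(u, v)` only. If `W = 0` this
forces `m = n` and `a = 1`; otherwise a fixed value `w ∈ W` would be a coordinate of `v'` for
`Q`-almost every `(u', v')`, which atomlessness forbids.
-/

open ProbabilityTheory

theorem Multiset.le_of_le_add_of_disjoint {α : Type*} [DecidableEq α] {s t u : Multiset α}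
    (h : s ≤ t + u) (hd : Disjoint s t) : s ≤ u := by
  rw [Multiset.le_iff_count] at h ⊢
  intro a
  by_cases ha : a ∈ s
  · simpa [Multiset.count_eq_zero.2 (Multiset.disjoint_left.1 hd ha)] using h a
  · simp [Multiset.count_eq_zero.2 ha]

theorem Multiset.eq_add_tsub_of_add_eq_add_of_disjoint {α : Type*} [DecidableEq α]
    {s s' t t' : Multiset α} (hd : Disjoint s s') (h : s' + t = s + t') :
    t' = s' + (t - s) := by
  have hst : s ≤ t := le_of_le_add_of_disjoint (h ▸ Multiset.le_add_right s t') hd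
  refine add_left_cancel (a := s) ?_
  rw [← h, add_left_comm, add_tsub_cancel_of_le hst]

theorem ofFn_eq_add_tsub_of_append_perm {α : Type*} [DecidableEq α] {m n : ℕ}
    {u u' : Fin m → α} {v v' : Fin n → α} (hd : ∀ i j, u i ≠ u' j)
    (hperm : ∃ π : Equiv.Perm (Fin (m + n)), ∀ i, Fin.append u' v i = Fin.append u v' (π i)) :
    (List.ofFn v' : Multiset α) = List.ofFn u' + ((List.ofFn v : Multiset α) - List.ofFn u) := by
  obtain ⟨π, hπ⟩ := hperm
  refine Multiset.eq_add_tsub_of_add_eq_add_of_disjoint ?_ ?_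
  · simpa [Multiset.disjoint_left, List.mem_ofFn, eq_comm] using hd
  · have := Equiv.Perm.ofFn_comp_perm π (Fin.append u v')
    rw [show Fin.append u v' ∘ π = Fin.append u' v from (funext hπ).symm,
      List.ofFn_fin_append, List.ofFn_fin_append] at this
    simpa using Multiset.coe_eq_coe.2 this

section FinAppend

variable {α : Type*} [MeasurableSpace α]

theorem measurable_finAppend (m n : ℕ) :
    Measurable fun p : (Fin m → α) × (Fin n → α) => Fin.append p.1 p.2 := by
  refine measurable_pi_iff.2 fun j => ?_
  induction j using Fin.addCases with
  | left i => simpa using measurable_fst.eval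
  | right i => simpa using measurable_snd.eval

theorem measurePreserving_finAppend (σ : Measure α) [SigmaFinite σ] (m n : ℕ) :
    MeasurePreserving (fun p : (Fin m → α) × (Fin n → α) => Fin.append p.1 p.2)
      ((Measure.pi fun _ => σ).prod (Measure.pi fun _ => σ)) (Measure.pi fun _ => σ) := by
  refine ⟨measurable_finAppend m n, (Measure.pi_eq fun s hs => ?_).symm⟩
  have hpre : (fun p : (Fin m → α) × (Fin n → α) => Fin.append p.1 p.2) ⁻¹' Set.univ.pi s =
      (Set.univ.pi fun i => s (Fin.castAdd n i)) ×ˢ (Set.univ.pi fun i => s (Fin.natAdd m i)) := by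
    ext p
    simp [Fin.forall_fin_add]
  rw [Measure.map_apply (measurable_finAppend m n) (MeasurableSet.univ_pi hs), hpre,
    Measure.prod_prod, Measure.pi_pi, Measure.pi_pi, Fin.prod_univ_add]

end FinAppend

theorem MeasureTheory.Measure.map_mul_prod_dirac {M : Type*} [Mul M] [MeasurableSpace M]
    [MeasurableMul₂ M] (μ : Measure M) [SFinite μ] (a : M) :
    (μ.prod (Measure.dirac a)).map (fun p => p.1 * p.2) = μ.map (· * a) := by
  rw [Measure.prod_dirac, Measure.map_map (by fun_prop) (by fun_prop)]
  rfl

theorem ae_ae_of_map_absolutelyContinuous {Z X Y : Type*} [MeasurableSpace Z]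
    [MeasurableSpace X] [MeasurableSpace Y] {ρ : Measure Z} {μ : Measure X} {ν : Measure Y}
    {f : Z → X} {g : Z → Y} (hf : AEMeasurable f ρ) (hg : AEMeasurable g ρ)
    (hfμ : ρ.map f ≪ μ) (hgν : ρ.map g ≪ ν) {P : X → Y → Prop}
    (hP : ∀ᵐ x ∂μ, ∀ᵐ y ∂ν, P x y) :
    ∀ᵐ z ∂ρ, ∀ᵐ z' ∂ρ, P (f z) (g z') := by
  filter_upwards [ae_of_ae_map hf (hfμ.ae_le hP)] with z hz
  exact ae_of_ae_map hg (hgν.ae_le hz)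

section Coupling

variable {X Y T : Type*} [MeasurableSpace X] [StandardBorelSpace X] [Nonempty X]
  [MeasurableSpace Y] [StandardBorelSpace Y] [Nonempty Y] [MeasurableSpace T] [MeasurableEq T]

theorem ae_ae_condDistrib_id_eq {μ : Measure X} [IsFiniteMeasure μ] {f : X → T}
    (hf : Measurable f) : ∀ᵐ t ∂μ.map f, ∀ᵐ x ∂condDistrib id f μ t, f x = t := by
  refine Measure.ae_ae_of_ae_compProd (p := fun p : T × X => f p.2 = p.1) ?_
  rw [compProd_map_condDistrib aemeasurable_id]
  exact (ae_map_iff (hf.prodMk measurable_id).aemeasurable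
    (measurableSet_eq_fun (hf.comp measurable_snd) measurable_fst)).2 (ae_of_all _ fun _ => rfl)

theorem exists_coupling_of_not_mutuallySingular {μ : Measure X} {ν : Measure Y}
    [IsFiniteMeasure μ] [IsFiniteMeasure ν] {f : X → T} {g : Y → T}
    (hf : Measurable f) (hg : Measurable g) (h : ¬ μ.map f ⟂ₘ ν.map g) :
    ∃ Q : Measure (X × Y), Q ≠ 0 ∧ Q.fst ≪ μ ∧ Q.snd ≪ ν ∧ ∀ᵐ p ∂Q, f p.1 = g p.2 := by
  set η := (μ.map f).withDensity ((ν.map g).rnDeriv (μ.map f))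
  have hημ : η ≪ μ.map f := withDensity_absolutelyContinuous _ _
  have hην : η ≪ ν.map g :=
    Measure.absolutelyContinuous_of_le (Measure.withDensity_rnDeriv_le _ _)
  have hη : η ≠ 0 := fun h0 => h ((Measure.withDensity_rnDeriv_eq_zero _ _).1 h0).symm
  -- Draw `t` from `η`, then `x` and `y` independently from the laws of `μ` given `f = t`
  -- and of `ν` given `g = t`.
  refine ⟨(condDistrib id f μ ×ₖ condDistrib id g ν) ∘ₘ η, ?_, ?_, ?_, ?_⟩
  · intro h0
    apply hη
    have := congrArg (fun ρ : Measure (X × Y) => ρ Set.univ) h0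
    simpa [Measure.bind_apply MeasurableSet.univ (Kernel.aemeasurable _)] using this
  · rw [Measure.fst, Measure.map_comp _ _ measurable_fst, ← Kernel.fst_eq, Kernel.fst_prod]
    calc condDistrib id f μ ∘ₘ η ≪ condDistrib id f μ ∘ₘ μ.map f := hημ.comp_right _
      _ = μ := by rw [condDistrib_comp_map hf.aemeasurable aemeasurable_id, Measure.map_id]
  · rw [Measure.snd, Measure.map_comp _ _ measurable_snd, ← Kernel.snd_eq, Kernel.snd_prod]
    calc condDistrib id g ν ∘ₘ η ≪ condDistrib id g ν ∘ₘ ν.map g := hην.comp_right _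
      _ = ν := by rw [condDistrib_comp_map hg.aemeasurable aemeasurable_id, Measure.map_id]
  · refine Measure.ae_comp_of_ae_ae
      (measurableSet_eq_fun (hf.comp measurable_fst) (hg.comp measurable_snd)) ?_
    filter_upwards [hημ.ae_le (ae_ae_condDistrib_id_eq hf),
      hην.ae_le (ae_ae_condDistrib_id_eq hg)] with t hx hy
    rw [Kernel.prod_apply]
    filter_upwards [Measure.quasiMeasurePreserving_fst.ae hx,
      Measure.quasiMeasurePreserving_snd.ae hy] with p h1 h2
    rw [h1, h2]

end Coupling

theorem exists_ae_ofFn_snd_eq_ofFn_fst_add {G : Type*} [CommGroup G] [MeasurableSpace G]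
    [DecidableEq G] (σ : Measure G) [SigmaFinite σ] [NullSingletonClass σ] {m n : ℕ} (a : G)
    {F : Set (Fin (m + n) → G)} (hF : ∀ᵐ x ∂Measure.pi fun _ => σ, x ∈ F)
    (hinj : ∀ x ∈ F, ∀ y ∈ F, ∏ i, x i = ∏ i, y i →
      ∃ π : Equiv.Perm (Fin (m + n)), ∀ i, y i = x (π i))
    {Q : Measure ((Fin m → G) × (Fin n → G))} (hQ0 : Q ≠ 0)
    (hQm : Q.fst ≪ Measure.pi fun _ => σ) (hQn : Q.snd ≪ Measure.pi fun _ => σ)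
    (hQ : ∀ᵐ ζ ∂Q, (∏ i, ζ.1 i) * a = ∏ i, ζ.2 i) :
    ∃ W : Multiset G, ∀ᵐ ζ ∂Q, (List.ofFn ζ.2 : Multiset G) = (List.ofFn ζ.1 : Multiset G) + W := by
  have hFprod := (measurePreserving_finAppend σ m n).quasiMeasurePreserving.ae hF
  have hF₁ : ∀ᵐ ζ ∂Q, ∀ᵐ ζ' ∂Q, Fin.append ζ.1 ζ'.2 ∈ F :=
    ae_ae_of_map_absolutelyContinuous measurable_fst.aemeasurable measurable_snd.aemeasurable
      hQm hQn (Measure.ae_ae_of_ae_prod hFprod)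
  have hF₂ : ∀ᵐ ζ ∂Q, ∀ᵐ ζ' ∂Q, Fin.append ζ'.1 ζ.2 ∈ F :=
    ae_ae_of_map_absolutelyContinuous measurable_snd.aemeasurable measurable_fst.aemeasurable
      hQn hQm (Measure.ae_ae_of_ae_prod
        (Measure.measurePreserving_swap.quasiMeasurePreserving.ae hFprod))
  have hdisj : ∀ᵐ ζ ∂Q, ∀ᵐ ζ' ∂Q, ∀ i j, ζ.1 i ≠ ζ'.1 j :=
    ae_ae_of_map_absolutelyContinuous measurable_fst.aemeasurable measurable_fst.aemeasurable
      hQm hQm (ae_of_all _ fun u => ae_all_iff.2 fun i => ae_all_iff.2 fun j =>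
        (Measure.ae_eval_ne _ j (u i)).mono fun _ h => h.symm)
  have : (ae Q).NeBot := ae_neBot.2 hQ0
  obtain ⟨ζ, hζ, hζF₁, hζF₂, hζdisj⟩ := (hQ.and (hF₁.and (hF₂.and hdisj))).exists
  refine ⟨(List.ofFn ζ.2 : Multiset G) - List.ofFn ζ.1, ?_⟩
  filter_upwards [hQ, hζF₁, hζF₂, hζdisj] with ζ' hζ' hx hy hxy
  refine ofFn_eq_add_tsub_of_append_perm hxy (hinj _ hx _ hy ?_)
  simp only [Fin.prod_univ_add, Fin.append_left, Fin.append_right]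
  rw [← hζ, ← hζ', mul_left_comm]

theorem stmt11_general (σ : Measure Circle) [IsProbabilityMeasure σ]
    (hσ : ∀ x : Circle, σ {x} = 0)
    (m n : ℕ) (a : Circle)
    (hma : ¬(m = n ∧ a = 1))
    (hns : ¬ (convPow σ n) ⟂ₘ
      (Measure.map (fun p : Circle × Circle => p.1 * p.2)
        ((convPow σ m).prod (Measure.dirac a))))
    (F : Set (Fin (m + n) → Circle)) (hF : MeasurableSet F)
    (hF1 : Measure.pi (fun _ : Fin (m + n) => σ) F = 1) :
    ∃ x ∈ F, ∃ y ∈ F, ∏ i, x i = ∏ i, y i ∧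
      ¬ ∃ π : Equiv.Perm (Fin (m + n)), ∀ i, y i = x (π i) := by
  classical
  by_contra! hinj
  have : NullSingletonClass σ := ⟨hσ⟩
  have hprod (k : ℕ) : Measurable fun z : Fin k → Circle => ∏ i, z i := by fun_prop
  unfold convPow at hns
  rw [Measure.map_mul_prod_dirac, Measure.map_map (by fun_prop) (hprod m)] at hns
  obtain ⟨Q, hQ0, hQm, hQn, hQ⟩ :=
    exists_coupling_of_not_mutuallySingular ((hprod m).mul_const a) (hprod n) fun h => hns h.symm
  obtain ⟨W, hW⟩ := exists_ae_ofFn_snd_eq_ofFn_fst_add σ a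
    (ae_iff.2 ((prob_compl_eq_zero_iff hF).2 hF1)) hinj hQ0 hQm hQn hQ
  have : (ae Q).NeBot := ae_neBot.2 hQ0
  rcases W.empty_or_exists_mem with rfl | ⟨w, hw⟩
  · obtain ⟨ζ, hM, hζ⟩ := (hW.and hQ).exists
    rw [add_zero] at hM
    have hmn : n = m := by simpa using congrArg Multiset.card hM
    have hprod_eq : ∏ i, ζ.2 i = ∏ i, ζ.1 i := by
      simpa [List.prod_ofFn] using congrArg Multiset.prod hM
    exact hma ⟨hmn.symm, mul_eq_left.1 (hζ.trans hprod_eq)⟩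
  · have hne : ∀ᵐ ζ ∂Q, ∀ i, ζ.2 i ≠ w := ae_of_ae_map measurable_snd.aemeasurable
      (hQn.ae_le (ae_all_iff.2 fun i => Measure.ae_eval_ne _ i w))
    obtain ⟨ζ, hM, hne⟩ := (hW.and hne).exists
    have : w ∈ (List.ofFn ζ.2 : Multiset Circle) := hM ▸ Multiset.mem_add.2 (Or.inr hw)
    obtain ⟨i, hi⟩ := List.mem_ofFn.1 (Multiset.mem_coe.1 this)
    exact hne i hi

/-- Let `σ` be an atomless probability Borel measure on the circle, `1 ≤ m ≤ n`, `a ∈ 𝕋`,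
with `(m, a) ≠ (n, 1)`. If `σ^{∗n}` is not singular with respect to `σ^{∗m} ∗ δ_a`, then
on no Borel set `F ⊆ 𝕋^{m+n}` of full `σ^{⊗(m+n)}`-measure is the product map
one-to-one modulo coordinate permutations. -/
theorem stmt11 (σ : Measure Circle) [IsProbabilityMeasure σ]
    (hσ : ∀ x : Circle, σ {x} = 0)
    (m n : ℕ) (hm : 1 ≤ m) (hmn : m ≤ n) (a : Circle)
    (hma : ¬(m = n ∧ a = 1))
    (hns : ¬ (convPow σ n) ⟂ₘ
      (Measure.map (fun p : Circle × Circle => p.1 * p.2)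
        ((convPow σ m).prod (Measure.dirac a))))
    (F : Set (Fin (m + n) → Circle)) (hF : MeasurableSet F)
    (hF1 : Measure.pi (fun _ : Fin (m + n) => σ) F = 1) :
    ∃ x ∈ F, ∃ y ∈ F, ∏ i, x i = ∏ i, y i ∧
      ¬ ∃ π : Equiv.Perm (Fin (m + n)), ∀ i, y i = x (π i) :=
  stmt11_general σ hσ m n a hma hns F hF hF1
end

section
/- Let σ be an atomless probability Borel measure on 𝕋, n ≥ 1 and q ≥ 2. Suppose that for every Borel set F ⊆ 𝕋ⁿ with σ^{⊗n}(F) = 1 there exist s ∈ 𝕋 and q points x₁, …, x_q ∈ F, pairwise not related by coordinate permutations, with C_n(xᵢ) = s for all i (where C_n is the product of coordinates). Then for every Borel set E ⊆ 𝕋^{2n} with σ^{⊗2n}(E) = 1 there exist t ∈ 𝕋 and q² points in E, pairwise not related by coordinate permutations, all having product of coordinates equal to t. -/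
/-! Split a point of `𝕋^{2n}` into two blocks `(u, v) ∈ 𝕋ⁿ × 𝕋ⁿ`. By Fubini, almost every `u`
has a full-measure fibre `{v | (u, v) ∈ E}`; the hypothesis yields `x₁, …, x_q` among such `u`,
then `y₁, …, y_q` in the intersection of their fibres. As `σ` has no atoms, the `yⱼ` can be taken
with no coordinate equal to a coordinate of some `xᵢ`, so a coordinate permutation relating
`(xᵢ, yⱼ)` to `(xᵢ', yⱼ')` preserves the two blocks and forces `i = i'`, `j = j'`. -/

open MeasureTheory

open Function

section CoordPerm

variable {ι κ α : Type*}

def CoordPermRelated (a b : ι → α) : Prop :=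
  ∃ π : Equiv.Perm ι, ∀ j, b j = a (π j)

theorem CoordPermRelated.of_injective [Finite ι] {a b : ι → α} {f : ι → ι}
    (hf : Injective f) (h : ∀ j, b j = a (f j)) : CoordPermRelated a b :=
  ⟨Equiv.ofBijective f hf.bijective_of_finite, h⟩

theorem CoordPermRelated.comp_equiv {ι' : Type*} {a b : ι' → α} (e : ι ≃ ι')
    (h : CoordPermRelated a b) : CoordPermRelated (a ∘ e) (b ∘ e) :=
  let ⟨π, hπ⟩ := h
  ⟨e.trans (π.trans e.symm), fun j => by simp [hπ]⟩

theorem CoordPermRelated.of_sumElim [Finite ι] [Finite κ] {x x' : ι → α} {y y' : κ → α}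
    (hx'y : ∀ i k, x' i ≠ y k) (hxy' : ∀ i k, x i ≠ y' k)
    (h : CoordPermRelated (Sum.elim x y) (Sum.elim x' y')) :
    CoordPermRelated x x' ∧ CoordPermRelated y y' := by
  obtain ⟨π, hπ⟩ := h
  have hl : ∀ i, ∃ i', π (.inl i) = .inl i' := fun i => by
    rcases hπi : π (.inl i) with i' | k
    · exact ⟨i', rfl⟩
    · exact absurd (by simpa [hπi] using hπ (.inl i)) (hx'y i k)
  have hr : ∀ k, ∃ k', π (.inr k) = .inr k' := fun k => by
    rcases hπk : π (.inr k) with i | k'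
    · exact absurd (by simpa [hπk] using (hπ (.inr k)).symm) (hxy' i k)
    · exact ⟨k', rfl⟩
  choose f hf using hl
  choose g hg using hr
  refine ⟨.of_injective (f := f) ?_ fun i => ?_, .of_injective (f := g) ?_ fun k => ?_⟩
  · exact fun i j hij => Sum.inl_injective (π.injective (by rw [hf, hf, hij]))
  · simpa [hf] using hπ (.inl i)
  · exact fun i j hij => Sum.inr_injective (π.injective (by rw [hg, hg, hij]))
  · simpa [hg] using hπ (.inr k)

end CoordPerm

section Fibre

variable {ι ι' M : Type*} [Fintype ι] [Fintype ι'] [CommMonoid M]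

def HasDistinctOrbitsInFibre (J : Type*) (F : Set (ι → M)) : Prop :=
  ∃ s : M, ∃ x : J → ι → M, (∀ i, x i ∈ F) ∧ (∀ i, ∏ j, x i j = s) ∧
    ∀ i i', i ≠ i' → ¬ CoordPermRelated (x i) (x i')

variable {J : Type*}

theorem HasDistinctOrbitsInFibre.mono {F G : Set (ι → M)} (hFG : F ⊆ G)
    (h : HasDistinctOrbitsInFibre J F) : HasDistinctOrbitsInFibre J G :=
  let ⟨s, x, hxF, hx⟩ := h
  ⟨s, x, fun i => hFG (hxF i), hx⟩

theorem HasDistinctOrbitsInFibre.of_embedding {J' : Type*} {F : Set (ι → M)} (e : J' ↪ J)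
    (h : HasDistinctOrbitsInFibre J F) : HasDistinctOrbitsInFibre J' F :=
  let ⟨s, x, hxF, hxs, hx⟩ := h
  ⟨s, x ∘ e, fun i => hxF (e i), fun i => hxs (e i), fun _ _ hii' => hx _ _ (e.injective.ne hii')⟩

theorem HasDistinctOrbitsInFibre.of_preimage_comp_equiv {F : Set (ι' → M)} (e : ι ≃ ι')
    (h : HasDistinctOrbitsInFibre J ((fun w : ι → M => w ∘ e.symm) ⁻¹' F)) :
    HasDistinctOrbitsInFibre J F := by
  obtain ⟨s, x, hxF, hxs, hx⟩ := h
  refine ⟨s, fun i => x i ∘ e.symm, hxF, fun i => ?_, fun i i' hii' hrel => hx i i' hii' ?_⟩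
  · rw [← hxs i]; exact e.symm.prod_comp (x i)
  · simpa [comp_def] using hrel.comp_equiv e

end Fibre

theorem forall_mem_ae_of_forall_measurableSet {α : Type*} [MeasurableSpace α] {μ : Measure α}
    [IsProbabilityMeasure μ] {P : Set α → Prop} (hP : Monotone P)
    (h : ∀ F, MeasurableSet F → μ F = 1 → P F) : ∀ F ∈ ae μ, P F := by
  intro F hF
  have hT : MeasurableSet (toMeasurable μ Fᶜ)ᶜ := (measurableSet_toMeasurable μ _).compl
  refine hP (Set.compl_subset_comm.1 (subset_toMeasurable μ Fᶜ)) (h _ hT ?_)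
  rw [← mem_ae_iff_prob_eq_one hT, compl_mem_ae_iff, measure_toMeasurable]
  exact hF

theorem ae_forall_apply_notMem {κ α : Type*} [Fintype κ] [MeasurableSpace α] {σ : Measure α}
    [SigmaFinite σ] [NullSingletonClass σ] {S : Set α} (hS : S.Countable) :
    ∀ᵐ v ∂(Measure.pi fun _ : κ => σ), ∀ k, v k ∉ S :=
  ae_all_iff.2 fun _ =>
    Measure.tendsto_eval_ae_ae.eventually (measure_eq_zero_iff_ae_notMem.1 (hS.measure_zero σ))

theorem hasDistinctOrbitsInFibre_sum_of_forall_mem_ae {ι κ I J M : Type*} [Fintype ι] [Fintype κ]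
    [Countable I] [CommMonoid M] [MeasurableSpace M] {σ : Measure M} [SigmaFinite σ]
    [NullSingletonClass σ]
    (hι : ∀ F ∈ ae (Measure.pi fun _ : ι => σ), HasDistinctOrbitsInFibre I F)
    (hκ : ∀ F ∈ ae (Measure.pi fun _ : κ => σ), HasDistinctOrbitsInFibre J F)
    {E : Set (ι ⊕ κ → M)} (hE : E ∈ ae (Measure.pi fun _ => σ)) :
    HasDistinctOrbitsInFibre (I × J) E := by
  have hE' : ∀ᵐ p ∂(Measure.pi fun _ : ι => σ).prod (Measure.pi fun _ : κ => σ),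
      Sum.elim p.1 p.2 ∈ E :=
    (measurePreserving_sumPiEquivProdPi_symm fun _ => σ).quasiMeasurePreserving.ae hE
  obtain ⟨s, x, hxE, hxs, hx⟩ := hι _ (Measure.ae_ae_of_ae_prod hE')
  obtain ⟨r, y, hyE, hyr, hy⟩ :=
    hκ {v | (∀ i, Sum.elim (x i) v ∈ E) ∧ ∀ k, v k ∉ Set.range fun p : I × ι => x p.1 p.2} <|
      (ae_all_iff.2 hxE).and (ae_forall_apply_notMem (Set.countable_range _))
  have hxy : ∀ i i' j j', x i i' ≠ y j j' := fun i i' j j' h => (hyE j).2 j' ⟨(i, i'), h⟩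
  refine ⟨s * r, fun p => Sum.elim (x p.1) (y p.2), fun p => (hyE p.2).1 p.1, fun p => ?_, ?_⟩
  · simp [Fintype.prod_sum_type, hxs, hyr]
  · rintro ⟨i, j⟩ ⟨i', j'⟩ hne hrel
    obtain ⟨hxi, hyj⟩ := hrel.of_sumElim (hxy i' · j ·) (hxy i · j' ·)
    exact hne (Prod.ext (by_contra fun h => hx i i' h hxi) (by_contra fun h => hy j j' h hyj))

theorem preimage_comp_equiv_mem_ae {ι ι' α : Type*} [Fintype ι] [Fintype ι'] [MeasurableSpace α]
    {σ : Measure α} [SigmaFinite σ] (e : ι ≃ ι') {E : Set (ι' → α)}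
    (hE : E ∈ ae (Measure.pi fun _ => σ)) :
    (fun w : ι → α => w ∘ e.symm) ⁻¹' E ∈ ae (Measure.pi fun _ => σ) :=
  (measurePreserving_arrowCongr' (fun _ => σ) (fun _ => σ) e (.refl α)
    fun _ => .id σ).quasiMeasurePreserving.ae hE

theorem stmt12_general (σ : Measure Circle) [IsProbabilityMeasure σ]
    (hσ : ∀ x : Circle, σ {x} = 0) (n q : ℕ)
    (hyp : ∀ F : Set (Fin n → Circle), MeasurableSet F →
      Measure.pi (fun _ : Fin n => σ) F = 1 →
      ∃ s : Circle, ∃ x : Fin q → (Fin n → Circle),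
        (∀ i, x i ∈ F) ∧ (∀ i, ∏ j, x i j = s) ∧
        (∀ i i', i ≠ i' → ¬ ∃ π : Equiv.Perm (Fin n), ∀ j, x i' j = x i (π j))) :
    ∀ E : Set (Fin (2 * n) → Circle), MeasurableSet E →
      Measure.pi (fun _ : Fin (2 * n) => σ) E = 1 →
      ∃ t : Circle, ∃ y : Fin (q * q) → (Fin (2 * n) → Circle),
        (∀ i, y i ∈ E) ∧ (∀ i, ∏ j, y i j = t) ∧
        (∀ i i', i ≠ i' →
          ¬ ∃ π : Equiv.Perm (Fin (2 * n)), ∀ j, y i' j = y i (π j)) := by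
  have : NullSingletonClass σ := ⟨hσ⟩
  have hyp_ae := forall_mem_ae_of_forall_measurableSet (P := HasDistinctOrbitsInFibre (Fin q))
    (fun _ _ hFG => HasDistinctOrbitsInFibre.mono hFG) hyp
  intro E hE hE1
  let e : Fin n ⊕ Fin n ≃ Fin (2 * n) := finSumFinEquiv.trans (finCongr (two_mul n).symm)
  have hE_ae := preimage_comp_equiv_mem_ae e ((mem_ae_iff_prob_eq_one hE).2 hE1)
  exact ((hasDistinctOrbitsInFibre_sum_of_forall_mem_ae hyp_ae hyp_ae hE_ae).of_preimage_comp_equiv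
    e).of_embedding finProdFinEquiv.symm.toEmbedding

/-- Let `σ` be an atomless probability Borel measure on the circle, `n ≥ 1`, `q ≥ 2`.
Suppose every Borel set `F ⊆ 𝕋ⁿ` of full `σ^{⊗n}`-measure contains `q` points, pairwise
not related by coordinate permutations, with equal products of coordinates. Then every
Borel set `E ⊆ 𝕋^{2n}` of full `σ^{⊗2n}`-measure contains `q²` points, pairwise not
related by coordinate permutations, with equal products of coordinates. -/
theorem stmt12 (σ : Measure Circle) [IsProbabilityMeasure σ]
    (hσ : ∀ x : Circle, σ {x} = 0) (n q : ℕ) (hn : 1 ≤ n) (hq : 2 ≤ q)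
    (hyp : ∀ F : Set (Fin n → Circle), MeasurableSet F →
      Measure.pi (fun _ : Fin n => σ) F = 1 →
      ∃ s : Circle, ∃ x : Fin q → (Fin n → Circle),
        (∀ i, x i ∈ F) ∧ (∀ i, ∏ j, x i j = s) ∧
        (∀ i i', i ≠ i' → ¬ ∃ π : Equiv.Perm (Fin n), ∀ j, x i' j = x i (π j))) :
    ∀ E : Set (Fin (2 * n) → Circle), MeasurableSet E →
      Measure.pi (fun _ : Fin (2 * n) => σ) E = 1 →
      ∃ t : Circle, ∃ y : Fin (q * q) → (Fin (2 * n) → Circle),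
        (∀ i, y i ∈ E) ∧ (∀ i, ∏ j, y i j = t) ∧
        (∀ i i', i ≠ i' →
          ¬ ∃ π : Equiv.Perm (Fin (2 * n)), ∀ j, y i' j = y i (π j)) :=
  stmt12_general σ hσ n q hyp
end

section
/- Let m, n ≥ 1 and let G = S(m)ⁿ act on the index set {1, …, n} × {1, …, m} by (π₁, …, πₙ)·(i, j) = (i, πᵢ(j)). Let z : {1,…,n} × {1,…,m} → 𝕋 be such that the products z(1, j₁)·z(2, j₂)⋯z(n, jₙ) are pairwise distinct as (j₁, …, jₙ) ranges over {1, …, m}ⁿ. Then the (m!)ⁿ points of 𝕋^m given, for π = (π₁,…,πₙ) ∈ G, by w_π = (Πᵢ₌₁ⁿ z(i, πᵢ(1)), Πᵢ₌₁ⁿ z(i, πᵢ(2)), …, Πᵢ₌₁ⁿ z(i, πᵢ(m))) are pairwise distinct, and they all have the same product of coordinates, namely Πᵢ₌₁ⁿ Πⱼ₌₁ᵐ z(i, j). -/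
open Function Finset

theorem Function.Injective.perm_pointwise {ι α β : Type*} {F : (ι → α) → β}
    (hF : Injective F) :
    Injective fun (π : ι → Equiv.Perm α) (j : α) => F fun i => π i j := by
  intro π π' h
  funext i
  ext j
  exact congrFun (hF (congrFun h j)) i

theorem prod_prod_perm_apply {ι α M : Type*} [Fintype ι] [Fintype α] [CommMonoid M]
    (z : ι → α → M) (π : ι → Equiv.Perm α) :
    (∏ j, ∏ i, z i (π i j)) = ∏ i, ∏ j, z i j := by
  rw [prod_comm]
  exact prod_congr rfl fun i _ => Equiv.prod_comp (π i) (z i)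

theorem stmt13_general (n m : ℕ) (z : Fin n → Fin m → Circle)
    (hz : ∀ j j' : Fin n → Fin m,
      (∏ i, z i (j i)) = (∏ i, z i (j' i)) → j = j') :
    Function.Injective
      (fun (π : Fin n → Equiv.Perm (Fin m)) => fun j : Fin m => ∏ i, z i (π i j)) ∧
    ∀ π : Fin n → Equiv.Perm (Fin m),
      (∏ j, ∏ i, z i (π i j)) = ∏ i, ∏ j, z i j :=
  ⟨Injective.perm_pointwise fun j j' => hz j j', prod_prod_perm_apply z⟩

/-- Let `G = S(m)ⁿ` and `z : {1,…,n} × {1,…,m} → 𝕋` be such that the products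
`z(1,j₁)⋯z(n,jₙ)` are pairwise distinct as `(j₁,…,jₙ)` ranges over `{1,…,m}ⁿ`. Then the
`(m!)ⁿ` points `w_π = (∏ᵢ z(i, πᵢ(1)), …, ∏ᵢ z(i, πᵢ(m)))`, `π ∈ G`, of `𝕋^m` are
pairwise distinct and all have product of coordinates `∏ᵢ∏ⱼ z(i,j)`. -/
theorem stmt13 (n m : ℕ) (hn : 1 ≤ n) (hm : 1 ≤ m) (z : Fin n → Fin m → Circle)
    (hz : ∀ j j' : Fin n → Fin m,
      (∏ i, z i (j i)) = (∏ i, z i (j' i)) → j = j') :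
    Function.Injective
      (fun (π : Fin n → Equiv.Perm (Fin m)) => fun j : Fin m => ∏ i, z i (π i j)) ∧
    ∀ π : Fin n → Equiv.Perm (Fin m),
      (∏ j, ∏ i, z i (π i j)) = ∏ i, ∏ j, z i j :=
  stmt13_general n m z hz
end
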